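/- For each cyclic permutation (i,j,k) of (1,2,3) and all signs ε, δ ∈ {+1,−1}: (K+1)(X_k · I_{ij}^ε P_i^δ) = 2 X_k I_{ij}^ε P_i^δ − (ε/2) X₁X₂X₃. -/

import Mathlib

open scoped TensorProduct

noncomputable section

/-- The standard positive-definite quadratic form on `ℝ³`. -/
abbrev Q3 : QuadraticForm ℝ (Fin 3 → ℝ) :=
  QuadraticMap.weightedSumSquares ℝ (fun _ : Fin 3 => (1 : ℝ))

/-- The Clifford algebra of 3-dimensional Euclidean space. -/
abbrev Cl3 : Type := CliffordAlgebra Q3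

/-- The tensor product of two copies of `Cl3`, as ℝ-algebras. -/
abbrev A3 : Type := Cl3 ⊗[ℝ] Cl3

/-- The generators `e₁, e₂, e₃` (indexed by `Fin 3`). -/
def e (l : Fin 3) : Cl3 := CliffordAlgebra.ι Q3 (Pi.single l 1)

/-- `X_l := e_l ⊗ e_l`. -/
def X (l : Fin 3) : A3 := e l ⊗ₜ[ℝ] e l

/-- `w^i := (e_j e_k) ⊗ 1` for `(i,j,k)` a cyclic permutation of the indices. -/
def w (i : Fin 3) : A3 := (e (i + 1) * e (i + 2)) ⊗ₜ[ℝ] (1 : Cl3)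

/-- The (ℝ-linear) operators `J_l(U) := (1/2)(w^l U − U w^l)`. -/
def J (l : Fin 3) (U : A3) : A3 := (1/2 : ℝ) • (w l * U - U * w l)

/-- Kähler's total angular momentum operator `K+1`. -/
def K1 (U : A3) : A3 := J 0 U * w 0 + J 1 U * w 1 + J 2 U * w 2

/-- The idempotents `I_{ij}^ε := (1/2)(1 + ε X_i X_j)`. -/
def Iem (i j : Fin 3) (ε : ℝ) : A3 := (1/2 : ℝ) • ((1 : A3) + ε • (X i * X j))

/-- The idempotents `P_l^δ := (1/2)(1 + δ X_l)`. -/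
def P (l : Fin 3) (δ : ℝ) : A3 := (1/2 : ℝ) • ((1 : A3) + δ • X l)

/-! Since `(w l)² = -1`, `(K+1) U = 3/2 U + 1/2 ∑ₗ w l U w l`. The map `U ↦ w l U w l`
negates `X l`, fixes the other two `X m`, and satisfies
`w l (U V) w l = -(w l U w l) (w l V w l)`. Hence products of one or two of the commuting
involutions `X m` are eigenvectors of `K+1` with eigenvalue `2`, while `X₁X₂X₃` is killed.
Expanding `X_k I_{ij}^ε P_i^δ = ¼ (X_k + δ X_k X_i + εδ X_k X_j + ε X₁X₂X₃)` gives the claim. -/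

lemma e_mul_self (l : Fin 3) : e l * e l = 1 := by
  rw [e, CliffordAlgebra.ι_sq_scalar]
  simp [QuadraticMap.weightedSumSquares_apply, Pi.single_apply]

lemma e_mul_e_eq_neg_of_ne {l m : Fin 3} (h : l ≠ m) : e m * e l = -(e l * e m) := by
  have hpolar : QuadraticMap.polar Q3 (Pi.single l 1) (Pi.single m 1) = 0 := by
    simp only [QuadraticMap.polar, QuadraticMap.weightedSumSquares_apply, Fin.sum_univ_three,
      Pi.add_apply, Pi.single_apply]
    fin_cases l <;> fin_cases m <;> simp_all
  have h := CliffordAlgebra.ι_mul_ι_add_swap (Q := Q3) (Pi.single l 1) (Pi.single m 1)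
  rw [hpolar, map_zero] at h
  exact eq_neg_of_add_eq_zero_right h

lemma e_mul_e_mul_self {a b : Fin 3} (hab : a ≠ b) : e a * e b * (e a * e b) = -1 := by
  rw [mul_assoc, ← mul_assoc (e b), e_mul_e_eq_neg_of_ne hab, neg_mul, mul_neg, mul_assoc,
    e_mul_self, mul_one, e_mul_self]

lemma e_mul_e_mul_e_comm {a b m : Fin 3} (ha : m ≠ a) (hb : m ≠ b) :
    e m * (e a * e b) = e a * e b * e m := by
  rw [← mul_assoc, e_mul_e_eq_neg_of_ne (Ne.symm ha), neg_mul, mul_assoc,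
    e_mul_e_eq_neg_of_ne (Ne.symm hb), mul_neg, neg_neg, mul_assoc]

lemma e_mul_e_mul_e_anticomm_left {a b : Fin 3} (hab : a ≠ b) :
    e a * (e a * e b) = -(e a * e b * e a) := by
  rw [mul_assoc, e_mul_e_eq_neg_of_ne hab, mul_neg, neg_neg]

lemma e_mul_e_mul_e_anticomm_right {a b : Fin 3} (hab : a ≠ b) :
    e b * (e a * e b) = -(e a * e b * e b) := by
  rw [← mul_assoc, e_mul_e_eq_neg_of_ne hab, neg_mul]

lemma X_mul_self (l : Fin 3) : X l * X l = 1 := by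
  rw [X, Algebra.TensorProduct.tmul_mul_tmul, e_mul_self, Algebra.TensorProduct.one_def]

lemma X_commute (l m : Fin 3) : Commute (X l) (X m) := by
  by_cases h : l = m
  · rw [h]
  · rw [Commute, SemiconjBy, X, X, Algebra.TensorProduct.tmul_mul_tmul,
      Algebra.TensorProduct.tmul_mul_tmul, e_mul_e_eq_neg_of_ne h, TensorProduct.neg_tmul,
      TensorProduct.tmul_neg, neg_neg]

lemma add_one_ne_add_two (l : Fin 3) : l + 1 ≠ l + 2 := by
  fin_cases l <;> decide

lemma w_mul_self (l : Fin 3) : w l * w l = -1 := by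
  rw [w, Algebra.TensorProduct.tmul_mul_tmul, e_mul_e_mul_self (add_one_ne_add_two l), mul_one,
    TensorProduct.neg_tmul, Algebra.TensorProduct.one_def]

lemma w_mul_X_mul_w_self (l : Fin 3) : w l * X l * w l = -X l := by
  have h1 : l ≠ l + 1 := by fin_cases l <;> decide
  have h2 : l ≠ l + 2 := by fin_cases l <;> decide
  rw [w, X, Algebra.TensorProduct.tmul_mul_tmul, Algebra.TensorProduct.tmul_mul_tmul, one_mul,
    mul_one, ← e_mul_e_mul_e_comm h1 h2, mul_assoc, e_mul_e_mul_self (add_one_ne_add_two l),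
    mul_neg, mul_one, TensorProduct.neg_tmul]

lemma w_mul_X_mul_w_of_ne {l m : Fin 3} (h : m ≠ l) : w l * X m * w l = X m := by
  have hB : e (l + 1) * e (l + 2) * e m = -(e m * (e (l + 1) * e (l + 2))) := by
    have hm : m = l + 1 ∨ m = l + 2 := by fin_cases l <;> fin_cases m <;> simp_all
    rcases hm with rfl | rfl
    · rw [e_mul_e_mul_e_anticomm_left (add_one_ne_add_two l), neg_neg]
    · rw [e_mul_e_mul_e_anticomm_right (add_one_ne_add_two l), neg_neg]
  rw [w, X, Algebra.TensorProduct.tmul_mul_tmul, Algebra.TensorProduct.tmul_mul_tmul, one_mul,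
    mul_one, hB, neg_mul, mul_assoc, e_mul_e_mul_self (add_one_ne_add_two l), mul_neg, mul_one,
    neg_neg]

lemma w_mul_X_mul_w (l m : Fin 3) : w l * X m * w l = if m = l then -X m else X m := by
  split_ifs with h
  · rw [h, w_mul_X_mul_w_self]
  · exact w_mul_X_mul_w_of_ne h

lemma w_mul_mul_w (l : Fin 3) (U V : A3) :
    w l * (U * V) * w l = -((w l * U * w l) * (w l * V * w l)) := by
  simp only [mul_assoc, ← mul_assoc (w l) (w l), w_mul_self, neg_one_mul, mul_neg, neg_neg]

lemma K1_eq (U : A3) : K1 U = (3 / 2 : ℝ) • U + (1 / 2 : ℝ) • ∑ l, w l * U * w l := by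
  simp only [K1, J, Fin.sum_univ_three, smul_mul_assoc, sub_mul, mul_assoc, w_mul_self, mul_neg,
    mul_one, sub_neg_eq_add]
  module

lemma K1_add (U V : A3) : K1 (U + V) = K1 U + K1 V := by
  simp only [K1_eq, mul_add, add_mul, Finset.sum_add_distrib]
  module

lemma K1_smul (c : ℝ) (U : A3) : K1 (c • U) = c • K1 U := by
  simp only [K1_eq, mul_smul_comm, smul_mul_assoc, ← Finset.smul_sum]
  module

lemma K1_X (m : Fin 3) : K1 (X m) = (2 : ℝ) • X m := by
  have hsum : ∑ l, w l * X m * w l = X m := by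
    simp only [w_mul_X_mul_w, Fin.sum_univ_three]
    fin_cases m <;> simp
  rw [K1_eq, hsum]
  module

lemma K1_X_mul_X {a b : Fin 3} (hab : a ≠ b) : K1 (X a * X b) = (2 : ℝ) • (X a * X b) := by
  have hsum : ∑ l, w l * (X a * X b) * w l = X a * X b := by
    simp only [w_mul_mul_w, w_mul_X_mul_w, Fin.sum_univ_three]
    fin_cases a <;> fin_cases b <;> simp_all
  rw [K1_eq, hsum]
  module

lemma K1_X_mul_X_mul_X : K1 (X 0 * X 1 * X 2) = 0 := by
  have hsum : ∑ l, w l * (X 0 * X 1 * X 2) * w l = (-3 : ℝ) • (X 0 * X 1 * X 2) := by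
    simp only [w_mul_mul_w, w_mul_X_mul_w, Fin.sum_univ_three, ↓reduceIte, Fin.isValue,
      Fin.reduceEq, neg_mul, mul_neg, neg_neg]
    module
  rw [K1_eq, hsum]
  module

lemma X_mul_Iem_mul_P (i j k : Fin 3) (ε δ : ℝ) :
    X k * (Iem i j ε * P i δ) =
      (1 / 4 : ℝ) •
        (X k + δ • (X k * X i) + (ε * δ) • (X k * X j) + ε • (X k * (X i * X j))) := by
  have hXji : X i * X j * X i = X j := by
    rw [(X_commute i j).eq, mul_assoc, X_mul_self, mul_one]
  simp only [Iem, P, mul_add, add_mul, smul_mul_assoc, mul_smul_comm, mul_one, one_mul, hXji]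
  module

lemma X_mul_X_mul_X_cyclic (i : Fin 3) : X (i + 2) * (X i * X (i + 1)) = X 0 * X 1 * X 2 := by
  fin_cases i
  · exact ((X_commute 2 0).mul_right (X_commute 2 1)).eq
  · exact (mul_assoc _ _ _).symm
  · exact (mul_assoc _ _ _).symm.trans
      (((X_commute 0 1).mul_right (X_commute 0 2)).eq.symm.trans (mul_assoc _ _ _).symm)

theorem stmt10_general (i j k : Fin 3) (hj : j = i + 1) (hk : k = i + 2)
    (ε δ : ℝ) :
    K1 (X k * (Iem i j ε * P i δ)) =
      2 * (X k * (Iem i j ε * P i δ)) - (ε / 2) • (X 0 * X 1 * X 2) := by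
  subst hj hk
  have hki : i + 2 ≠ i := by fin_cases i <;> decide
  have hkj : i + 2 ≠ i + 1 := (add_one_ne_add_two i).symm
  rw [X_mul_Iem_mul_P, X_mul_X_mul_X_cyclic, K1_smul, K1_add, K1_add, K1_add, K1_smul, K1_smul,
    K1_smul, K1_X, K1_X_mul_X hki, K1_X_mul_X hkj, K1_X_mul_X_mul_X, two_mul]
  module

/-- For each cyclic permutation `(i,j,k)` and signs `ε, δ`:
`(K+1)(X_k I_{ij}^ε P_i^δ) = 2 X_k I_{ij}^ε P_i^δ − (ε/2) X₁X₂X₃`. -/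
theorem stmt10 (i j k : Fin 3) (hj : j = i + 1) (hk : k = i + 2)
    (ε δ : ℝ) (hε : ε = 1 ∨ ε = -1) (hδ : δ = 1 ∨ δ = -1) :
    K1 (X k * (Iem i j ε * P i δ)) =
      2 * (X k * (Iem i j ε * P i δ)) - (ε / 2) • (X 0 * X 1 * X 2) :=
  stmt10_general i j k hj hk ε δ
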